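/- Let (P,⪯₊,⪯₋) be any double poset. Then for every integer k ≥ 0, the number of lattice points of the k-th dilate of the reduced double chain polytope satisfies |k·(C(P,⪯₊) − C(P,⪯₋)) ∩ ℤ^P| = Σ_{S ⊆ P} Ω°_{(S,⪯₊)}(k) · Ω_{(P∖S,⪯₋)}(k+1), where the sum is over all subsets S of P with the induced orders, and Ω°_∅(k) = Ω_∅(k) = 1 by convention. -/

import Mathlib

open Set Pointwise

/-- The chain polytope of a finite poset `(P, le)`: nonnegative functions whose sums
over chains are at most `1`. -/
def chainPoly (P : Type*) [Fintype P] (le : P → P → Prop) : Set (P → ℝ) :=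
  {g | (∀ a, 0 ≤ g a) ∧
    ∀ C : Finset P, (∀ a ∈ C, ∀ b ∈ C, le a b ∨ le b a) → ∑ a ∈ C, g a ≤ 1}

/-- The lattice points of `S ⊆ ℝ^P`, as a set of integer vectors. -/
def intPoints {P : Type*} (S : Set (P → ℝ)) : Set (P → ℤ) :=
  {m | (fun a => (m a : ℝ)) ∈ S}

/-- The order polynomial `Ω_{(S,le)}(k)`: the number of order-preserving maps from the
subposet induced on `S ⊆ P` to the `k`-chain. -/
noncomputable def orderPolynomial {P : Type*} (le : P → P → Prop) (S : Finset P) (k : ℕ) : ℕ :=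
  Nat.card {φ : {a // a ∈ S} → Fin k //
    ∀ a b : {a // a ∈ S}, le a.1 b.1 → φ a ≤ φ b}

/-- The strict order polynomial `Ω°_{(S,le)}(k)`: the number of strictly
order-preserving maps from the subposet induced on `S ⊆ P` to the `k`-chain. -/
noncomputable def strictOrderPolynomial {P : Type*} (le : P → P → Prop) (S : Finset P) (k : ℕ) : ℕ :=
  Nat.card {φ : {a // a ∈ S} → Fin k //
    ∀ a b : {a // a ∈ S}, le a.1 b.1 → a.1 ≠ b.1 → φ a < φ b}

/-!
An integer vector `m` lies in `k • (C(P,⪯₊) − C(P,⪯₋))` exactly when its positive part has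
all `⪯₊`-chain sums at most `k` and its negative part has all `⪯₋`-chain sums at most `k`:
chain polytopes are down-closed in the nonnegative orthant, so `m = k • (u - v)` forces
`m⁺ ≤ k • u` and `m⁻ ≤ k • v`. Grouping such `m` by the set `S` where `m` is positive splits
them into a positive weighting of `(S, ⪯₊)` and a nonnegative weighting of `(P ∖ S, ⪯₋)`,
both with chain sums at most `k`. Stanley's transfer map `g ↦ chainHeight g`, the largest
`g`-weight of a chain below `a`, carries nonnegative such weightings bijectively onto
order-preserving maps to `{0, …, k}` and positive ones onto strictly order-preserving maps to
`{1, …, k}`; its inverse takes the jumps `ψ a - max_{b < a} ψ b`.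
-/

open Finset

section ChainBounded

variable {Q M : Type*} [AddCommMonoid M]

def IsChainBounded [LE M] (r : Q → Q → Prop) (t : M) (g : Q → M) : Prop :=
  ∀ C : Finset Q, IsChain r (C : Set Q) → ∑ c ∈ C, g c ≤ t

variable {r : Q → Q → Prop} {t : M} {f g : Q → M}

lemma IsChainBounded.apply_le [LE M] (h : IsChainBounded r t g) (a : Q) : g a ≤ t := by
  simpa using h {a} (by simp)

lemma IsChainBounded.mono [PartialOrder M] [IsOrderedAddMonoid M] (h : IsChainBounded r t g)
    (hfg : f ≤ g) : IsChainBounded r t f :=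
  fun C hC => (sum_le_sum fun a _ => hfg a).trans (h C hC)

lemma IsChainBounded.smul {t : ℝ} {g : Q → ℝ} (h : IsChainBounded r t g) {c : ℝ} (hc : 0 ≤ c) :
    IsChainBounded r (c * t) (c • g) := fun C hC => by
  simpa [← mul_sum] using mul_le_mul_of_nonneg_left (h C hC) hc

lemma isChainBounded_natCast_iff {k : ℕ} {g : Q → ℕ} :
    IsChainBounded r (k : ℝ) (fun a => (g a : ℝ)) ↔ IsChainBounded r k g := by
  simp only [IsChainBounded, ← Nat.cast_sum, Nat.cast_le]

lemma isChainBounded_subtype_iff [LE M] {p : Q → Prop} [DecidablePred p]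
    (hf : ∀ a, ¬ p a → f a = 0) :
    IsChainBounded (fun a b : Subtype p => r a b) t (fun a => f a) ↔ IsChainBounded r t f := by
  refine ⟨fun h C hC => ?_, fun h C hC => ?_⟩
  · rw [← sum_filter_of_ne fun a _ => not_imp_comm.1 (hf a), ← sum_subtype_eq_sum_filter]
    exact h _ fun a ha b hb hab =>
      hC (mem_subtype.1 ha) (mem_subtype.1 hb) (Subtype.coe_ne_coe.2 hab)
  · have := h (C.map (Function.Embedding.subtype p)) (by
      rw [coe_map]; exact hC.image_of_map_rel _ r Subtype.val fun _ _ => id)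
    rwa [sum_map] at this

end ChainBounded

section ChainPolytope

variable {P : Type*} [Fintype P]

lemma mem_chainPoly_iff {le : P → P → Prop} [Std.Refl le] {g : P → ℝ} :
    g ∈ chainPoly P le ↔ 0 ≤ g ∧ IsChainBounded le 1 g :=
  and_congr Iff.rfl
    ⟨fun h C hC => h C fun _ ha _ hb => hC.total ha hb,
      fun h C hC => h C fun a ha b hb _ => hC a ha b hb⟩

lemma mem_smul_sub_chainPoly {le₁ le₂ : P → P → Prop} [Std.Refl le₁] [Std.Refl le₂] {t : ℝ}
    (ht : 0 ≤ t) {x : P → ℝ} :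
    x ∈ t • (chainPoly P le₁ - chainPoly P le₂) ↔
      IsChainBounded le₁ t x⁺ ∧ IsChainBounded le₂ t x⁻ := by
  simp only [Set.mem_smul_set, Set.mem_sub, mem_chainPoly_iff]
  constructor
  · rintro ⟨_, ⟨u, ⟨hu0, hu⟩, v, ⟨hv0, hv⟩, rfl⟩, rfl⟩
    refine ⟨(by simpa using hu.smul ht : IsChainBounded le₁ t (t • u)).mono ?_,
      (by simpa using hv.smul ht : IsChainBounded le₂ t (t • v)).mono ?_⟩
    · rw [posPart_def, smul_sub]
      exact sup_le (sub_le_self _ (smul_nonneg ht hv0)) (smul_nonneg ht hu0)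
    · rw [negPart_def, smul_sub, neg_sub]
      exact sup_le (sub_le_self _ (smul_nonneg ht hu0)) (smul_nonneg ht hv0)
  · rintro ⟨h₁, h₂⟩
    rcases ht.eq_or_lt with rfl | ht
    · refine ⟨0, ⟨0, ⟨le_rfl, fun C _ => by simp⟩, 0, ⟨le_rfl, fun C _ => by simp⟩, sub_zero 0⟩, ?_⟩
      rw [zero_smul, ← posPart_sub_negPart x,
        (posPart_nonneg x).antisymm' fun a => h₁.apply_le a,
        (negPart_nonneg x).antisymm' fun a => h₂.apply_le a, sub_zero]
    · have hinv : 0 ≤ t⁻¹ := inv_nonneg.2 ht.le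
      refine ⟨t⁻¹ • x⁺ - t⁻¹ • x⁻, ⟨_, ⟨smul_nonneg hinv (posPart_nonneg x), ?_⟩,
        _, ⟨smul_nonneg hinv (negPart_nonneg x), ?_⟩, rfl⟩, ?_⟩
      · simpa [inv_mul_cancel₀ ht.ne'] using h₁.smul hinv
      · simpa [inv_mul_cancel₀ ht.ne'] using h₂.smul hinv
      · rw [← smul_sub, smul_inv_smul₀ ht.ne', posPart_sub_negPart]

lemma intPoints_smul_sub_chainPoly (le₁ le₂ : P → P → Prop) [Std.Refl le₁] [Std.Refl le₂]
    (k : ℕ) :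
    intPoints ((k : ℝ) • (chainPoly P le₁ - chainPoly P le₂)) =
      {m | IsChainBounded le₁ k (fun a => (m a).toNat) ∧
        IsChainBounded le₂ k (fun a => (-m a).toNat)} := by
  ext m
  have hpos : (fun a => (m a : ℝ))⁺ = fun a => ((m a).toNat : ℝ) := funext fun a => by
    rw [Pi.posPart_apply, posPart_def]; exact_mod_cast (Int.toNat_eq_max (m a)).symm
  have hneg : (fun a => (m a : ℝ))⁻ = fun a => ((-m a).toNat : ℝ) := funext fun a => by
    rw [Pi.negPart_apply, negPart_def]; exact_mod_cast (Int.toNat_eq_max (-m a)).symm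
  simp only [intPoints, Set.mem_ofPred_eq, mem_smul_sub_chainPoly k.cast_nonneg, hpos, hneg,
    isChainBounded_natCast_iff]

end ChainPolytope

section Transfer

lemma IsChain.exists_forall_le_of_finset {α : Type*} [Preorder α] {C : Finset α}
    (hC : IsChain (· ≤ ·) (C : Set α)) (hne : C.Nonempty) : ∃ t ∈ C, ∀ c ∈ C, c ≤ t := by
  obtain ⟨t, htC, hmax⟩ := exists_maximal hne
  refine ⟨t, htC, fun c hc => ?_⟩
  rcases eq_or_ne c t with rfl | hct
  · exact le_rfl
  · exact (hC hc htC hct).elim id (hmax hc)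

open scoped Classical

variable {Q : Type*} [PartialOrder Q] [Fintype Q]

noncomputable def chainsBelow (a : Q) : Finset (Finset Q) :=
  univ.filter fun C => IsChain (· ≤ ·) (C : Set Q) ∧ ∀ c ∈ C, c ≤ a

lemma mem_chainsBelow {a : Q} {C : Finset Q} :
    C ∈ chainsBelow a ↔ IsChain (· ≤ ·) (C : Set Q) ∧ ∀ c ∈ C, c ≤ a := by
  simp [chainsBelow]

noncomputable def chainHeight (g : Q → ℕ) (a : Q) : ℕ :=
  (chainsBelow a).sup fun C => ∑ c ∈ C, g c

noncomputable def jumps (ψ : Q → ℕ) (a : Q) : ℕ :=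
  ψ a - (univ.filter (· < a)).sup ψ

variable {g : Q → ℕ}

lemma sum_le_chainHeight {C : Finset Q} (hC : IsChain (· ≤ ·) (C : Set Q)) {a : Q}
    (ha : ∀ c ∈ C, c ≤ a) : ∑ c ∈ C, g c ≤ chainHeight g a :=
  le_sup (f := fun C => ∑ c ∈ C, g c) (mem_chainsBelow.2 ⟨hC, ha⟩)

lemma exists_sum_eq_chainHeight (g : Q → ℕ) (a : Q) :
    ∃ C : Finset Q, IsChain (· ≤ ·) (C : Set Q) ∧ (∀ c ∈ C, c ≤ a) ∧
      ∑ c ∈ C, g c = chainHeight g a := by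
  obtain ⟨C, hC, h⟩ := exists_mem_eq_sup (chainsBelow a) ⟨∅, mem_chainsBelow.2 (by simp)⟩
    fun C => ∑ c ∈ C, g c
  exact ⟨C, (mem_chainsBelow.1 hC).1, (mem_chainsBelow.1 hC).2, h.symm⟩

lemma isChainBounded_iff_chainHeight_le {k : ℕ} :
    IsChainBounded (· ≤ ·) k g ↔ ∀ a, chainHeight g a ≤ k := by
  refine ⟨fun h a => Finset.sup_le fun C hC => h C (mem_chainsBelow.1 hC).1, fun h C hC => ?_⟩
  rcases C.eq_empty_or_nonempty with rfl | hne
  · simp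
  obtain ⟨t, -, htop⟩ := hC.exists_forall_le_of_finset hne
  exact (sum_le_chainHeight hC htop).trans (h t)

lemma le_chainHeight (a : Q) : g a ≤ chainHeight g a := by
  simpa using sum_le_chainHeight (g := g) (C := {a}) (by simp) (by simp)

lemma chainHeight_add_le {a b : Q} (hab : a < b) : chainHeight g a + g b ≤ chainHeight g b := by
  obtain ⟨C, hC, hle, hsum⟩ := exists_sum_eq_chainHeight g a
  have hb : b ∉ C := fun hb => (hle b hb).not_gt hab
  have hchain : IsChain (· ≤ ·) ((insert b C : Finset Q) : Set Q) := by
    rw [coe_insert]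
    exact hC.insert fun c hc _ => Or.inr ((hle c hc).trans hab.le)
  calc chainHeight g a + g b = ∑ c ∈ insert b C, g c := by rw [sum_insert hb, hsum, add_comm]
    _ ≤ chainHeight g b := sum_le_chainHeight hchain <| by
      simpa using fun c hc => (hle c hc).trans hab.le

lemma monotone_chainHeight : Monotone (chainHeight g) :=
  monotone_iff_forall_lt.2 fun _ _ hab => le_self_add.trans (chainHeight_add_le hab)

lemma chainHeight_eq (g : Q → ℕ) (a : Q) :
    chainHeight g a = g a + (univ.filter (· < a)).sup (chainHeight g) := by
  refine le_antisymm ?_ ?_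
  · obtain ⟨C, hC, hle, hsum⟩ := exists_sum_eq_chainHeight g a
    have hbelow : ∑ c ∈ C.erase a, g c ≤ (univ.filter (· < a)).sup (chainHeight g) := by
      rcases (C.erase a).eq_empty_or_nonempty with he | hne
      · simp [he]
      have hC' : IsChain (· ≤ ·) ((C.erase a : Finset Q) : Set Q) :=
        hC.mono (coe_subset.2 (erase_subset a C))
      obtain ⟨t, ht, htop⟩ := hC'.exists_forall_le_of_finset hne
      refine (sum_le_chainHeight hC' htop).trans (le_sup ?_)
      simpa using (hle t (mem_of_mem_erase ht)).lt_of_ne (ne_of_mem_erase ht)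
    calc chainHeight g a = ∑ c ∈ C, g c := hsum.symm
      _ ≤ ∑ c ∈ insert a (C.erase a), g c := sum_le_sum_of_subset (insert_erase_subset a C)
      _ = g a + ∑ c ∈ C.erase a, g c := sum_insert (notMem_erase a C)
      _ ≤ _ := Nat.add_le_add_left hbelow _
  · rcases (univ.filter (· < a)).eq_empty_or_nonempty with he | hne
    · simpa [he] using le_chainHeight a
    obtain ⟨b, hb, hsup⟩ := exists_mem_eq_sup _ hne (chainHeight g)
    rw [hsup, add_comm]
    exact chainHeight_add_le (by simpa using hb)

lemma jumps_chainHeight (g : Q → ℕ) : jumps (chainHeight g) = g :=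
  funext fun a => by rw [jumps, chainHeight_eq g a, Nat.add_sub_cancel]

lemma chainHeight_jumps {ψ : Q → ℕ} (hψ : Monotone ψ) : chainHeight (jumps ψ) = ψ := by
  funext a
  induction a using WellFoundedLT.induction with
  | _ a ih =>
    have hsup : (univ.filter (· < a)).sup (chainHeight (jumps ψ)) =
        (univ.filter (· < a)).sup ψ :=
      sup_congr rfl fun b hb => ih b (by simpa using hb)
    have hle : (univ.filter (· < a)).sup ψ ≤ ψ a :=
      Finset.sup_le fun b hb => hψ (by simpa using hb : b < a).le
    rw [chainHeight_eq, hsup, jumps]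
    omega

lemma jumps_pos {ψ : Q → ℕ} (hψ : StrictMono ψ) (hψ0 : ∀ a, 0 < ψ a) (a : Q) : 0 < jumps ψ a :=
  tsub_pos_of_lt <| (Finset.sup_lt_iff (hψ0 a)).2 fun b hb => hψ (by simpa using hb)

noncomputable def chainBoundedEquivMonotone (k : ℕ) :
    {g : Q → ℕ // IsChainBounded (· ≤ ·) k g} ≃ {ψ : Q → Fin (k + 1) // Monotone ψ} where
  toFun g := ⟨fun a => ⟨chainHeight g.1 a,
      Nat.lt_succ_of_le (isChainBounded_iff_chainHeight_le.1 g.2 a)⟩,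
    fun _ _ hab => Fin.mk_le_mk.2 (monotone_chainHeight hab)⟩
  invFun ψ := ⟨jumps fun a => ψ.1 a, by
    rw [isChainBounded_iff_chainHeight_le, chainHeight_jumps fun _ _ hab => ψ.2 hab]
    exact fun a => Nat.lt_succ_iff.1 (ψ.1 a).2⟩
  left_inv g := Subtype.ext (jumps_chainHeight g.1)
  right_inv ψ := Subtype.ext <| funext fun a =>
    Fin.ext (congrFun (chainHeight_jumps fun _ _ hab => ψ.2 hab) a)

/-- Here `Fin k` stands for `{1, …, k}`, so `φ` is `chainHeight g - 1`. -/
noncomputable def chainBoundedPosEquivStrictMono (k : ℕ) :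
    {g : Q → ℕ // IsChainBounded (· ≤ ·) k g ∧ ∀ a, 0 < g a} ≃
      {φ : Q → Fin k // StrictMono φ} where
  toFun g := ⟨fun a => ⟨chainHeight g.1 a - 1, by
      have := isChainBounded_iff_chainHeight_le.1 g.2.1 a
      have := (g.2.2 a).trans_le (le_chainHeight a)
      omega⟩,
    fun a b hab => Fin.mk_lt_mk.2 <| by
      have := chainHeight_add_le (g := g.1) hab
      have := (g.2.2 a).trans_le (le_chainHeight a)
      have := g.2.2 b
      omega⟩
  invFun φ :=
    have hφ : StrictMono fun a => (φ.1 a : ℕ) + 1 := fun _ _ hab => Nat.succ_lt_succ (φ.2 hab)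
    ⟨jumps fun a => φ.1 a + 1, by
      rw [isChainBounded_iff_chainHeight_le, chainHeight_jumps hφ.monotone]
      exact fun a => (φ.1 a).2,
    jumps_pos hφ fun _ => Nat.succ_pos _⟩
  left_inv g := Subtype.ext <| by
    have : (fun a => chainHeight g.1 a - 1 + 1) = chainHeight g.1 := funext fun a => by
      have := (g.2.2 a).trans_le (le_chainHeight a)
      omega
    simp only [this, jumps_chainHeight]
  right_inv φ := by
    have hφ : StrictMono fun a => (φ.1 a : ℕ) + 1 := fun _ _ hab => Nat.succ_lt_succ (φ.2 hab)
    ext a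
    simp [chainHeight_jumps hφ.monotone]

end Transfer

section DoublePoset

abbrev IsPartialOrder.toPartialOrder {α : Type*} {r : α → α → Prop} (h : IsPartialOrder α r) :
    PartialOrder α where
  le := r
  le_refl := h.refl
  le_trans := h.trans
  le_antisymm := h.antisymm

variable {P : Type*} {r : P → P → Prop}

noncomputable def IsPartialOrder.chainBoundedEquivMonotone (h : IsPartialOrder P r)
    (S : Finset P) (k : ℕ) :
    {g : S → ℕ // IsChainBounded (fun a b : S => r a b) k g} ≃
      {ψ : S → Fin (k + 1) // ∀ a b : S, r a b → ψ a ≤ ψ b} :=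
  letI := h.toPartialOrder
  _root_.chainBoundedEquivMonotone k

noncomputable def IsPartialOrder.chainBoundedPosEquivStrictMono (h : IsPartialOrder P r)
    (S : Finset P) (k : ℕ) :
    {g : S → ℕ // IsChainBounded (fun a b : S => r a b) k g ∧ ∀ a, 0 < g a} ≃
      {φ : S → Fin k // ∀ a b : S, r a b → a.1 ≠ b.1 → φ a < φ b} :=
  letI := h.toPartialOrder
  (_root_.chainBoundedPosEquivStrictMono k).trans <| Equiv.subtypeEquivRight fun _ =>
    ⟨fun hφ _ _ hab hne => hφ (lt_of_le_of_ne hab (Subtype.coe_ne_coe.1 hne)),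
      fun hφ a b hab => hφ a b hab.le (Subtype.coe_ne_coe.2 hab.ne)⟩

end DoublePoset

section SignSplit

variable {P : Type*} [Fintype P] [DecidableEq P] (r s : P → P → Prop) (k : ℕ) (S : Finset P)

noncomputable def signSplitEquiv :
    {m : P → ℤ // (IsChainBounded r k (fun a => (m a).toNat) ∧
        IsChainBounded s k (fun a => (-m a).toNat)) ∧ univ.filter (0 < m ·) = S} ≃
      {g : S → ℕ // IsChainBounded (fun a b : S => r a b) k g ∧ ∀ a, 0 < g a} ×
        {h : ↥Sᶜ → ℕ // IsChainBounded (fun a b : ↥Sᶜ => s a b) k h} where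
  toFun m :=
    have hS (a : P) : 0 < m.1 a ↔ a ∈ S := by simpa using Finset.ext_iff.1 m.2.2 a
    (⟨fun a => (m.1 a).toNat,
      (isChainBounded_subtype_iff (p := (· ∈ S)) fun a ha => by simpa using mt (hS a).1 ha).2
        m.2.1.1,
      fun a => by simpa using (hS a).2 a.2⟩,
     ⟨fun a => (-m.1 a).toNat,
      (isChainBounded_subtype_iff (p := (· ∈ Sᶜ)) fun a ha => by
        simpa using ((hS a).2 (by simpa using ha)).le).2
        m.2.1.2⟩)
  invFun gh := ⟨fun a => if ha : a ∈ S then gh.1.1 ⟨a, ha⟩ else -gh.2.1 ⟨a, mem_compl.2 ha⟩, by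
    refine ⟨⟨(isChainBounded_subtype_iff (p := (· ∈ S)) fun a ha => by simp [ha]).1 ?_,
      (isChainBounded_subtype_iff (p := (· ∈ Sᶜ)) fun a ha => by
        simp [show a ∈ S by simpa using ha]).1 ?_⟩, ?_⟩
    · convert gh.1.2.1 with a
      simp
    · convert gh.2.2 with a
      simp [mem_compl.1 a.2]
    · ext a
      by_cases ha : a ∈ S <;> simp [ha, gh.1.2.2]⟩
  left_inv m := by
    have hS (a : P) : 0 < m.1 a ↔ a ∈ S := by simpa using Finset.ext_iff.1 m.2.2 a
    ext a
    by_cases ha : a ∈ S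
    · simpa [ha] using ((hS a).2 ha).le
    · have := mt (hS a).1 ha
      simp [ha]
      omega
  right_inv gh := by
    ext a
    · simp
    · simp [mem_compl.1 a.2]

end SignSplit

/-- For any double poset and `k ≥ 0`,
`|k·(C(P,⪯₊) − C(P,⪯₋)) ∩ ℤ^P| = ∑_{S ⊆ P} Ω°_{(S,⪯₊)}(k) · Ω_{(P∖S,⪯₋)}(k+1)`. -/
theorem lattice_points_reduced_doubleChainPoly
    (P : Type*) [Fintype P] [DecidableEq P] (lep lem : P → P → Prop)
    (hp : IsPartialOrder P lep) (hm : IsPartialOrder P lem) (k : ℕ) :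
    (intPoints ((k : ℝ) • (chainPoly P lep - chainPoly P lem))).ncard =
      ∑ S : Finset P,
        strictOrderPolynomial lep S k * orderPolynomial lem Sᶜ (k + 1) := by
  rw [intPoints_smul_sub_chainPoly, ← Nat.card_coe_set_eq]
  set M := {m : P → ℤ | IsChainBounded lep k (fun a => (m a).toNat) ∧
    IsChainBounded lem k (fun a => (-m a).toNat)}
  let fiberEquiv (S : Finset P) : {m : M // univ.filter (0 < m.1 ·) = S} ≃
      {φ : S → Fin k // ∀ a b : S, lep a b → a.1 ≠ b.1 → φ a < φ b} ×
        {ψ : ↥Sᶜ → Fin (k + 1) // ∀ a b : ↥Sᶜ, lem a b → ψ a ≤ ψ b} :=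
    (Equiv.subtypeSubtypeEquivSubtypeInter _ _).trans <| (signSplitEquiv lep lem k S).trans <|
      (hp.chainBoundedPosEquivStrictMono S k).prodCongr (hm.chainBoundedEquivMonotone Sᶜ k)
  have (S : Finset P) := Finite.of_equiv _ (fiberEquiv S).symm
  rw [← Nat.card_congr (Equiv.sigmaFiberEquiv fun m : M => univ.filter (0 < m.1 ·)),
    Nat.card_sigma]
  exact sum_congr rfl fun S _ => (Nat.card_congr (fiberEquiv S)).trans (Nat.card_prod _ _)
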